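/- Let Λ be the set of λ-terms in de Bruijn style (inductively generated by variables x_i for i ∈ ℕ, application (a b), and abstraction (λ a)), with substitution defined recursively by x_i[f] = f i, (a b)[f] = (a[f])(b[f]), and (λ a)[f] = λ(a[x_1, (f 1)⁺, (f 2)⁺, …]) where t⁺ := t[x_2, x_3, …]. Say a term a depends on the variable x_i if a ≠ a[s_i], where s_i(i) = x_{i+1} and s_i(j) = x_j for j ≠ i, and let FV(a) be the set of variables on which a depends. For i ∈ ℕ let 𝛌x_i.a := λ(a[u_i]) where u_i(i) = x_1 and u_i(j) = x_{j+1} for j ≠ i. Then for all a, b ∈ Λ: (1) FV(x_i) = {x_i}; (2) FV(a b) = FV(a) ∪ FV(b); (3) FV(𝛌x_i.a) = FV(a) ∖ {x_i}. -/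
import Mathlib


/-- λ-terms in de Bruijn style. -/
inductive Lam : Type where
  | var : ℕ+ → Lam
  | app : Lam → Lam → Lam
  | abs : Lam → Lam

namespace Lam

/-- Renaming of variables (auxiliary to define substitution). -/
def rename : Lam → (ℕ+ → ℕ+) → Lam
  | var i, r => var (r i)
  | app a b, r => app (a.rename r) (b.rename r)
  | abs a, r => abs (a.rename (fun j => if j = 1 then 1 else r (j - 1) + 1))

/-- Simultaneous substitution: `x_i[f] = f i`, `(a b)[f] = (a[f])(b[f])`,
`(λ a)[f] = λ(a[x_1, (f 1)⁺, (f 2)⁺, …])`. -/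
def subst : Lam → (ℕ+ → Lam) → Lam
  | var i, f => f i
  | app a b, f => app (a.subst f) (b.subst f)
  | abs a, f =>
      abs (a.subst (fun j => if j = 1 then var 1 else (f (j - 1)).rename (· + 1)))

/-- `a` depends on the variable `x_i` if `a ≠ a[s_i]`, where `s_i(i) = x_{i+1}` and
`s_i(j) = x_j` for `j ≠ i`. -/
def DependsOn (a : Lam) (i : ℕ+) : Prop :=
  a ≠ a.subst (fun j => if j = i then var (i + 1) else var j)

/-- `FV(a)`: the set of variables on which `a` depends. -/
def FV (a : Lam) : Set ℕ+ := {i | a.DependsOn i}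

/-- `𝛌x_i.a := λ(a[u_i])` where `u_i(i) = x_1` and `u_i(j) = x_{j+1}` for `j ≠ i`. -/
def lamAt (i : ℕ+) (a : Lam) : Lam :=
  abs (a.subst (fun j => if j = i then var 1 else var (j + 1)))

/-- Structural set of occurring (free) variables. -/
def occ : Lam → Set ℕ+
  | var i => {i}
  | app a b => occ a ∪ occ b
  | abs a => {i | i + 1 ∈ occ a}

lemma pnat_add_one_ne_one (k : ℕ+) : k + 1 ≠ 1 := by
  intro h
  have := congrArg (PNat.val) h
  simp [PNat.add_coe] at this

lemma pnat_add_sub (k : ℕ+) : k + 1 - 1 = k := by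
  apply PNat.coe_injective
  rw [PNat.sub_coe]
  simp [PNat.lt_add_left]

lemma pnat_sub_add (j : ℕ+) (h : j ≠ 1) : j - 1 + 1 = j := by
  have : ∃ k : ℕ+, j = k + 1 := by
    obtain ⟨n, hn⟩ := j
    match n, hn with
    | 1, _ => exact absurd rfl h
    | (m+2), _ => exact ⟨⟨m+1, Nat.succ_pos _⟩, rfl⟩
  obtain ⟨k, rfl⟩ := this
  rw [pnat_add_sub]

lemma occ_rename (a : Lam) : ∀ (r : ℕ+ → ℕ+) (i : ℕ+),
    i ∈ occ (a.rename r) ↔ ∃ j ∈ occ a, r j = i := by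
  induction a with
  | var k => intro r i; simp [rename, occ, eq_comm]
  | app a b iha ihb =>
      intro r i
      simp only [rename, occ, Set.mem_union, iha, ihb]
      constructor
      · rintro (⟨j, hj, hji⟩ | ⟨j, hj, hji⟩) <;> exact ⟨j, by tauto, hji⟩
      · rintro ⟨j, hj | hj, hji⟩
        · exact Or.inl ⟨j, hj, hji⟩
        · exact Or.inr ⟨j, hj, hji⟩
  | abs a ih =>
      intro r i
      simp only [rename, occ, Set.mem_setOf_eq, ih]
      constructor
      · rintro ⟨j, hj, hji⟩
        by_cases h1 : j = 1
        · simp [h1] at hji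
          exact absurd hji.symm (pnat_add_one_ne_one i)
        · simp [h1] at hji
          have hji' : r (j - 1) = i := by simpa using hji
          refine ⟨j - 1, ?_, hji'⟩
          rwa [pnat_sub_add j h1]
      · rintro ⟨j, hj, hji⟩
        refine ⟨j + 1, hj, ?_⟩
        simp [pnat_add_one_ne_one j, pnat_add_sub, hji]

lemma occ_subst (a : Lam) : ∀ (f : ℕ+ → Lam) (i : ℕ+),
    i ∈ occ (a.subst f) ↔ ∃ j ∈ occ a, i ∈ occ (f j) := by
  induction a with
  | var k => intro f i; simp [subst, occ]
  | app a b iha ihb =>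
      intro f i
      simp only [subst, occ, Set.mem_union, iha, ihb]
      constructor
      · rintro (⟨j, hj, hji⟩ | ⟨j, hj, hji⟩) <;> exact ⟨j, by tauto, hji⟩
      · rintro ⟨j, hj | hj, hji⟩
        · exact Or.inl ⟨j, hj, hji⟩
        · exact Or.inr ⟨j, hj, hji⟩
  | abs a ih =>
      intro f i
      simp only [subst, occ, Set.mem_setOf_eq, ih]
      constructor
      · rintro ⟨j, hj, hji⟩
        by_cases h1 : j = 1
        · simp [h1, occ] at hji
          exact absurd hji (pnat_add_one_ne_one i)
        · simp only [h1, if_false] at hji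
          rw [occ_rename] at hji
          obtain ⟨k, hk, hki⟩ := hji
          have : k = i := by simpa using hki
          subst this
          refine ⟨j - 1, ?_, hk⟩
          rwa [pnat_sub_add j h1]
      · rintro ⟨j, hj, hji⟩
        refine ⟨j + 1, hj, ?_⟩
        simp only [pnat_add_one_ne_one j, if_false, pnat_add_sub]
        rw [occ_rename]
        exact ⟨i, hji, rfl⟩

lemma subst_id_of (a : Lam) : ∀ (f : ℕ+ → Lam), (∀ j ∈ occ a, f j = var j) → a.subst f = a := by
  induction a with
  | var k => intro f h; exact h k rfl
  | app a b iha ihb =>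
      intro f h
      simp only [subst]
      rw [iha f (fun j hj => h j (Or.inl hj)), ihb f (fun j hj => h j (Or.inr hj))]
  | abs a ih =>
      intro f h
      simp only [subst]
      rw [ih _ ?_]
      intro j hj
      by_cases h1 : j = 1
      · simp [h1]
      · simp only [h1, if_false]
        have : f (j - 1) = var (j - 1) := by
          apply h
          show (j - 1) + 1 ∈ occ a
          rwa [pnat_sub_add j h1]
        rw [this]
        simp only [rename]
        rw [pnat_sub_add j h1]

lemma dependsOn_iff (a : Lam) (i : ℕ+) : a.DependsOn i ↔ i ∈ occ a := by
  constructor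
  · intro h
    by_contra hi
    apply h
    symm
    apply subst_id_of
    intro j hj
    have : j ≠ i := fun e => hi (e ▸ hj)
    simp [this]
  · intro hi h
    have : i ∈ occ (a.subst (fun j => if j = i then var (i + 1) else var j)) := h ▸ hi
    rw [occ_subst] at this
    obtain ⟨j, hj, hji⟩ := this
    by_cases hij : j = i
    · simp [hij, occ] at hji
      have := congrArg (PNat.val) hji
      rw [PNat.add_coe, PNat.one_coe] at this
      omega
    · simp [hij, occ] at hji
      exact hij (hji ▸ rfl)

lemma fv_eq (a : Lam) : FV a = occ a := by
  ext i; exact dependsOn_iff a i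

end Lam

/-- Free variables of λ-terms: `FV(x_i) = {i}`, `FV(a b) = FV(a) ∪ FV(b)`, and
`FV(𝛌x_i.a) = FV(a) ∖ {i}`. -/
theorem free_variables_of_lambda_terms (a b : Lam) (i : ℕ+) :
    Lam.FV (Lam.var i) = {i} ∧
    Lam.FV (Lam.app a b) = Lam.FV a ∪ Lam.FV b ∧
    Lam.FV (Lam.lamAt i a) = Lam.FV a \ {i} := by
  refine ⟨?_, ?_, ?_⟩
  · rw [Lam.fv_eq]; rfl
  · rw [Lam.fv_eq, Lam.fv_eq, Lam.fv_eq]; rfl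
  · rw [Lam.fv_eq, Lam.fv_eq]
    ext k
    simp only [Lam.lamAt, Lam.occ, Set.mem_setOf_eq, Set.mem_diff, Set.mem_singleton_iff]
    rw [Lam.occ_subst]
    constructor
    · rintro ⟨j, hj, hjk⟩
      by_cases hji : j = i
      · simp [hji, Lam.occ] at hjk
        exact absurd hjk (Lam.pnat_add_one_ne_one k)
      · simp [hji, Lam.occ] at hjk
        have : k = j := by simpa using hjk
        subst this
        exact ⟨hj, hji⟩
    · rintro ⟨hk, hki⟩
      refine ⟨k, hk, ?_⟩
      simp [hki, Lam.occ]
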